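/- Every weak slice regular function on a slice-open set in W is path-slice: if Ω is slice-open in W and f : Ω → ℝ^{2n} is weak slice regular, then there exist functions F₁, F₂ : 𝒫(ℂ^d, Ω) → ℝ^{2n} such that for every γ ∈ 𝒫(ℂ^d, Ω) and every I ∈ 𝒞(γ, Ω): f(γ^I(1)) = F₁(γ) + I(F₂(γ)). -/

import Mathlib

noncomputable section

/-- `ℝ^{2n}` as a Euclidean space. -/
abbrev V (n : ℕ) : Type := EuclideanSpace ℝ (Fin (2 * n))

/-- `End(ℝ^{2n})`: the (continuous, hence in finite dimension all) real-linear
endomorphisms of `ℝ^{2n}`; multiplication is composition. -/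
abbrev EndE (n : ℕ) : Type := V n →L[ℝ] V n

/-- The set `𝔠_n` of complex structures on `ℝ^{2n}`. -/
def CS (n : ℕ) : Set (EndE n) := {I | I * I = -1}

/-- The slice `ℂ_I = {x·id + y·I : x, y ∈ ℝ}`. -/
def CI {n : ℕ} (I : EndE n) : Set (EndE n) := {A | ∃ x y : ℝ, A = x • (1 : EndE n) + y • I}

/-- The slice `ℂ_I^d ⊆ [End(ℝ^{2n})]^d`. -/
def CId (n d : ℕ) (I : EndE n) : Set (Fin d → EndE n) := {q | ∀ ℓ, q ℓ ∈ CI I}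

/-- `ℝ^d` identified with the tuples `(x₁·id, …, x_d·id)`. -/
def RealSet (n d : ℕ) : Set (Fin d → EndE n) := {q | ∀ ℓ, ∃ x : ℝ, q ℓ = x • (1 : EndE n)}

/-- The weak slice-cone `W = ⋃_{I ∈ 𝒞} ℂ_I^d`. -/
def Wcone (n d : ℕ) (𝒞 : Set (EndE n)) : Set (Fin d → EndE n) := ⋃ I ∈ 𝒞, CId n d I

/-- `Ω` is slice-open: `Ω ⊆ W` and for every `I ∈ 𝒞`, `Ω ∩ ℂ_I^d` is open in the
Euclidean (subspace) topology of `ℂ_I^d`. -/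
def SliceOpen (n d : ℕ) (𝒞 : Set (EndE n)) (Ω : Set (Fin d → EndE n)) : Prop :=
  Ω ⊆ Wcone n d 𝒞 ∧ ∀ I ∈ 𝒞, ∃ U : Set (Fin d → EndE n), IsOpen U ∧ Ω ∩ CId n d I = U ∩ CId n d I

/-- The slice topology `τ_s`: a set is open iff its intersection with each slice `ℂ_I^d`
(`I ∈ 𝒞`) is open in the Euclidean topology of the slice. -/
def sliceTop (n d : ℕ) (𝒞 : Set (EndE n)) : TopologicalSpace (Fin d → EndE n) :=
  ⨆ I ∈ 𝒞, TopologicalSpace.coinduced (Subtype.val : CId n d I → Fin d → EndE n) inferInstance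

/-- A slice-domain: a nonempty slice-open set, connected in the slice topology. -/
def SliceDomain (n d : ℕ) (𝒞 : Set (EndE n)) (Ω : Set (Fin d → EndE n)) : Prop :=
  SliceOpen n d 𝒞 Ω ∧ @IsConnected _ (sliceTop n d 𝒞) Ω

/-- `Ω` is real-connected: `Ω ∩ ℝ^d` is connected (empty counts as connected). -/
def RealConnected (n d : ℕ) (Ω : Set (Fin d → EndE n)) : Prop :=
  IsPreconnected (Ω ∩ RealSet n d)

/-- Φ_I : ℝ^d × ℝ^d → [End(ℝ^{2n})]^d, (x, y) ↦ (x₁·id + y₁·I, …, x_d·id + y_d·I). -/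
def Phi (n d : ℕ) (I : EndE n) : (Fin d → ℝ) × (Fin d → ℝ) → Fin d → EndE n :=
  fun p ℓ => p.1 ℓ • (1 : EndE n) + p.2 ℓ • I

/-- The standard basis direction in the x-coordinates. -/
def ex (d : ℕ) (ℓ : Fin d) : (Fin d → ℝ) × (Fin d → ℝ) := (Pi.single ℓ 1, 0)

/-- The standard basis direction in the y-coordinates. -/
def ey (d : ℕ) (ℓ : Fin d) : (Fin d → ℝ) × (Fin d → ℝ) := (0, Pi.single ℓ 1)

/-- f is weak slice regular on Ω: for every I ∈ 𝒞, f ∘ Φ_I is (Fréchet, real)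
differentiable on Φ_I⁻¹(Ω) and satisfies the Cauchy–Riemann equations
∂(f∘Φ_I)/∂x_ℓ + I(∂(f∘Φ_I)/∂y_ℓ) = 0 there, for ℓ = 1, …, d. -/
def WSRegular (n d : ℕ) (𝒞 : Set (EndE n)) (Ω : Set (Fin d → EndE n))
    (f : (Fin d → EndE n) → V n) : Prop :=
  ∀ I ∈ 𝒞, DifferentiableOn ℝ (f ∘ Phi n d I) (Phi n d I ⁻¹' Ω) ∧
    ∀ p ∈ Phi n d I ⁻¹' Ω, ∀ ℓ : Fin d,
      fderiv ℝ (f ∘ Phi n d I) p (ex d ℓ) + I (fderiv ℝ (f ∘ Phi n d I) p (ey d ℓ)) = 0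

/-- Ψ_I : ℂ^d → ℂ_I^d, defined componentwise by x + y i ↦ x·id + y·I. -/
def Psi (n d : ℕ) (I : EndE n) : (Fin d → ℂ) → Fin d → EndE n :=
  fun z ℓ => (z ℓ).re • (1 : EndE n) + (z ℓ).im • I

/-- γ belongs to 𝒫(ℂ^d): γ is a continuous path on [0,1] in ℂ^d with real initial
point. -/
def IsPath0 (d : ℕ) (γ : ℝ → Fin d → ℂ) : Prop :=
  ContinuousOn γ (Set.Icc 0 1) ∧ ∀ ℓ, (γ 0 ℓ).im = 0

/-- 𝒞(γ, Ω): the set of I ∈ 𝒞 with γ^I([0,1]) ⊆ Ω, where γ^I = Ψ_I ∘ γ. -/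
def CPath (n d : ℕ) (𝒞 : Set (EndE n)) (Ω : Set (Fin d → EndE n))
    (γ : ℝ → Fin d → ℂ) : Set (EndE n) :=
  {I ∈ 𝒞 | ∀ t ∈ Set.Icc (0:ℝ) 1, Psi n d I (γ t) ∈ Ω}

/-- γ ∈ 𝒫(ℂ^d, Ω): γ ∈ 𝒫(ℂ^d) and γ^I([0,1]) ⊆ Ω for some I ∈ 𝒞. -/
def PathIn (n d : ℕ) (𝒞 : Set (EndE n)) (Ω : Set (Fin d → EndE n))
    (γ : ℝ → Fin d → ℂ) : Prop :=
  IsPath0 d γ ∧ (CPath n d 𝒞 Ω γ).Nonempty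

/-!
For finitely many admissible `I₁, …, I_k`, the map `z ↦ (f (Ψ_{I_j} z))_j` from `ℂ^d` to
`(ℝ^{2n})^k` is holomorphic for the complex structure `J = (I_j)_j`, by the Cauchy–Riemann
equations, and at real points it takes values in the `J`-invariant subspace
`W = {(a + I_j b)_j}`. For `μ` a real functional vanishing on `W`, `x ↦ μ x - i μ (J x)`
turns it into a holomorphic function vanishing at the real points near `γ(0)`, hence, by the
identity theorem along the connected set `γ([0,1])`, at `γ(1)`; so the values at `γ(1)` lie in
`W`. The affine conditions `f (γ^I(1)) = a + I b` on `(a, b)` are thus solvable for every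
finite set of `I ∈ 𝒞(γ, Ω)`, hence, by finite dimensionality, for all of them at once.
-/

open Set Metric Filter Topology

section IdentityTheorem

variable {E F : Type*} [NormedAddCommGroup E] [NormedSpace ℂ E]
  [NormedAddCommGroup F] [NormedSpace ℂ F] [CompleteSpace F]

lemma eqOn_zero_of_eq_zero_on_real {g : ℂ → F} {x : ℂ} {r : ℝ} (hx : x.im = 0)
    (hg : DifferentiableOn ℂ g (ball x r)) (hreal : ∀ ζ ∈ ball x r, ζ.im = 0 → g ζ = 0) :
    EqOn g 0 (ball x r) := by
  rcases le_or_gt r 0 with hr | hr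
  · simp [ball_eq_empty.2 hr]
  have hline : Tendsto (fun t : ℝ => x + t) (𝓝[≠] 0) (𝓝[≠] x) := by
    refine tendsto_nhdsWithin_of_tendsto_nhds_of_eventually_within _ ?_ ?_
    · have : Continuous fun t : ℝ => x + t := by fun_prop
      simpa using (this.tendsto 0).mono_left nhdsWithin_le_nhds
    · filter_upwards [self_mem_nhdsWithin] with t ht
      simpa using ht
  have hfreq : ∃ᶠ ζ in 𝓝[≠] x, g ζ = 0 := by
    refine hline.frequently (Eventually.frequently ?_)
    filter_upwards [hline (mem_nhdsWithin_of_mem_nhds (ball_mem_nhds x hr))] with t ht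
    exact hreal _ ht (by simp [hx])
  exact (hg.analyticOnNhd isOpen_ball).eqOn_zero_of_preconnected_of_frequently_eq_zero
    (convex_ball x r).isPreconnected (mem_ball_self hr) hfreq

lemma Convex.eqOn_zero_of_eventuallyEq_zero {φ : E → F} {U : Set E} (hUc : Convex ℝ U)
    (hU : IsOpen U) (hφ : DifferentiableOn ℂ φ U) {q : E} (hq : q ∈ U) (h : φ =ᶠ[𝓝 q] 0) :
    EqOn φ 0 U := by
  intro w hw
  let m : ℂ → E := fun ζ => q + ζ • (w - q)
  have hm : Differentiable ℂ m := by fun_prop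
  have hconv : Convex ℝ (m ⁻¹' U) := (hUc.translate_preimage_right q).linear_preimage
    ((LinearMap.toSpanSingleton ℂ E (w - q)).restrictScalars ℝ)
  have han : AnalyticOnNhd ℂ (φ ∘ m) (m ⁻¹' U) :=
    (hφ.comp hm.differentiableOn (mapsTo_preimage m U)).analyticOnNhd
      (hU.preimage hm.continuous)
  have h0 : φ ∘ m =ᶠ[𝓝 0] 0 := by
    have : Tendsto m (𝓝 0) (𝓝 q) := by simpa [m] using hm.continuous.tendsto 0
    exact this.eventually h
  simpa [m] using han.eqOn_zero_of_preconnected_of_eventuallyEq_zero hconv.isPreconnected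
    (by simpa [m] using hq) h0 (show m 1 ∈ U by simpa [m] using hw)

lemma IsPreconnected.eqOn_zero_of_eventuallyEq_zero {φ : E → F} {U S : Set E} (hU : IsOpen U)
    (hφ : DifferentiableOn ℂ φ U) (hS : IsPreconnected S) (hSU : S ⊆ U) {q : E} (hqS : q ∈ S)
    (hq : φ =ᶠ[𝓝 q] 0) : EqOn φ 0 S := by
  suffices hZ : S ⊆ {z | φ =ᶠ[𝓝 z] 0} from fun z hz => (hZ hz).eq_of_nhds
  refine hS.subset_of_closure_inter_subset isOpen_setOfPred_eventually_nhds ⟨q, hqS, hq⟩ ?_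
  rintro z ⟨hz, hzS⟩
  obtain ⟨ε, hε, hball⟩ := Metric.isOpen_iff.mp hU z (hSU hzS)
  obtain ⟨p, hp, hpz⟩ := Metric.mem_closure_iff.mp hz ε hε
  exact eventuallyEq_of_mem (ball_mem_nhds z hε) <|
    (convex_ball z ε).eqOn_zero_of_eventuallyEq_zero isOpen_ball (hφ.mono hball)
      (mem_ball'.mpr hpz) hp

lemma eqOn_zero_of_eq_zero_on_real_ball {d : ℕ} {φ : (Fin d → ℂ) → F} {c : Fin d → ℂ} {r : ℝ}
    (hc : ∀ ℓ, (c ℓ).im = 0) (hφ : DifferentiableOn ℂ φ (ball c r))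
    (hreal : ∀ z ∈ ball c r, (∀ ℓ, (z ℓ).im = 0) → φ z = 0) : EqOn φ 0 (ball c r) := by
  suffices h : ∀ s : Finset (Fin d), ∀ z ∈ ball c r, (∀ ℓ ∉ s, (z ℓ).im = 0) → φ z = 0 from
    fun z hz => h Finset.univ z hz fun ℓ hℓ => absurd (Finset.mem_univ ℓ) hℓ
  intro s
  induction s using Finset.induction_on with
  | empty => exact fun z hz hre => hreal z hz fun ℓ => hre ℓ (Finset.notMem_empty ℓ)
  | insert j s _ ih =>
    intro z hz hre
    have hr : 0 < r := pos_of_mem_ball hz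
    have hupd : MapsTo (Function.update z j) (ball (c j) r) (ball c r) := by
      intro ζ hζ
      rw [ball_pi c hr] at hz ⊢
      exact (update_mem_pi_iff_of_mem hz).mpr fun _ => hζ
    have hslice : EqOn (φ ∘ Function.update z j) 0 (ball (c j) r) := by
      refine eqOn_zero_of_eq_zero_on_real (hc j)
        (hφ.comp (fun ζ _ => (hasFDerivAt_update z ζ).differentiableAt.differentiableWithinAt)
          hupd)
        fun ζ hζ hζre => ih _ (hupd hζ) fun ℓ hℓ => ?_
      rcases eq_or_ne ℓ j with rfl | hne
      · simpa using hζre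
      · simpa [Function.update_of_ne hne] using hre ℓ (by simp [hne, hℓ])
    simpa using hslice (mem_ball.mpr ((dist_le_pi_dist z c j).trans_lt hz))

end IdentityTheorem

lemma HasFDerivAt.differentiableAt_complex {G F : Type*} [NormedAddCommGroup G]
    [NormedSpace ℂ G] [NormedAddCommGroup F] [NormedSpace ℂ F] {g : G → F} {L : G →L[ℝ] F}
    {z : G} (hg : HasFDerivAt g L z) (hL : ∀ v, L (Complex.I • v) = Complex.I • L v) :
    DifferentiableAt ℂ g z := by
  let Lc : G →L[ℂ] F :=
    { toFun := L
      map_add' := L.map_add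
      map_smul' := fun c v => by
        conv_lhs => rw [← Complex.re_add_im c]
        conv_rhs => rw [RingHom.id_apply, ← Complex.re_add_im c]
        simp only [add_smul, mul_smul, Complex.coe_smul, map_add, map_smul, hL]
      cont := L.continuous }
  exact (hasFDerivAt_of_restrictScalars ℝ hg (f' := Lc) rfl).differentiableAt

section ComplexStructure

variable {X : Type*} [AddCommGroup X] [Module ℝ X]

def complexifyWith (J : X →ₗ[ℝ] X) (μ : Module.Dual ℝ X) : X →ₗ[ℝ] ℂ :=
  Complex.ofRealCLM.toLinearMap ∘ₗ μ - LinearMap.toSpanSingleton ℝ ℂ Complex.I ∘ₗ μ ∘ₗ J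

lemma complexifyWith_apply (J : X →ₗ[ℝ] X) (μ : Module.Dual ℝ X) (x : X) :
    complexifyWith J μ x = μ x - μ (J x) * Complex.I := by
  simp [complexifyWith, Complex.real_smul]

lemma re_complexifyWith (J : X →ₗ[ℝ] X) (μ : Module.Dual ℝ X) (x : X) :
    (complexifyWith J μ x).re = μ x := by
  simp [complexifyWith_apply]

lemma complexifyWith_apply_map {J : X →ₗ[ℝ] X} (hJ : ∀ x, J (J x) = -x)
    (μ : Module.Dual ℝ X) (x : X) :
    complexifyWith J μ (J x) = Complex.I * complexifyWith J μ x := by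
  rw [complexifyWith_apply, complexifyWith_apply, hJ, map_neg]
  push_cast
  linear_combination (μ (J x) : ℂ) * Complex.I_mul_I

end ComplexStructure

lemma exists_forall_eq_of_forall_finset {K ι P Y : Type*} [Field K] [AddCommGroup P]
    [Module K P] [FiniteDimensional K P] [AddCommGroup Y] [Module K Y] (S : Set ι)
    (T : ι → P →ₗ[K] Y) (g : ι → Y) (h : ∀ s : Finset ι, ↑s ⊆ S → ∃ p, ∀ i ∈ s, T i p = g i) :
    ∃ p, ∀ i ∈ S, T i p = g i := by
  classical
  -- A finite `s` whose joint kernel `N s` is minimal works: adding any `i` cannot shrink it.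
  let N : Finset ι → Submodule K P := fun s => ⨅ i ∈ s, LinearMap.ker (T i)
  obtain ⟨_, ⟨s, hsS, rfl⟩, hmin⟩ :=
    wellFounded_lt.has_min {N s | (s) (_ : ↑s ⊆ S)} ⟨_, ∅, by simp, rfl⟩
  obtain ⟨p, hp⟩ := h s hsS
  refine ⟨p, fun i hi => ?_⟩
  have hsub : ↑(insert i s) ⊆ S := by simpa [Set.insert_subset_iff] using ⟨hi, hsS⟩
  obtain ⟨p', hp'⟩ := h _ hsub
  have heq : N (insert i s) = N s :=
    eq_of_le_of_not_lt (biInf_mono fun _ => Finset.mem_insert_of_mem) (hmin _ ⟨_, hsub, rfl⟩)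
  have hker : p - p' ∈ N (insert i s) := by
    rw [heq]
    simp only [N, Submodule.mem_iInf, LinearMap.mem_ker, map_sub]
    intro j hj
    rw [hp j hj, hp' j (Finset.mem_insert_of_mem hj), sub_self]
  simp only [N, Submodule.mem_iInf, LinearMap.mem_ker, map_sub] at hker
  rw [← hp' i (Finset.mem_insert_self i s)]
  exact sub_eq_zero.mp (hker i (Finset.mem_insert_self i s))

lemma IsPreconnected.mapsTo_of_complexStructure {X : Type*} [NormedAddCommGroup X]
    [NormedSpace ℝ X] [FiniteDimensional ℝ X] {d : ℕ} (J : X →L[ℝ] X)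
    (hJ : ∀ x, J (J x) = -x) (W : Submodule ℝ X) (hJW : ∀ x ∈ W, J x ∈ W)
    {h : (Fin d → ℂ) → X} {U S : Set (Fin d → ℂ)} (hU : IsOpen U) (hh : DifferentiableOn ℝ h U)
    (hCR : ∀ z ∈ U, ∀ v, fderiv ℝ h z (Complex.I • v) = J (fderiv ℝ h z v))
    (hreal : ∀ z ∈ U, (∀ ℓ, (z ℓ).im = 0) → h z ∈ W)
    (hS : IsPreconnected S) (hSU : S ⊆ U) {c : Fin d → ℂ} (hcS : c ∈ S)
    (hc : ∀ ℓ, (c ℓ).im = 0) : MapsTo h S W := by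
  intro z hz
  rw [SetLike.mem_coe, ← Subspace.dualAnnihilator_dualCoannihilator_eq (W := W),
    Submodule.mem_dualCoannihilator]
  intro μ hμ
  rw [Submodule.mem_dualAnnihilator] at hμ
  let Λ : X →L[ℝ] ℂ := LinearMap.toContinuousLinearMap (complexifyWith J μ)
  have hΛW : ∀ x ∈ W, Λ x = 0 := fun x hx => by
    simp [Λ, complexifyWith_apply, hμ x hx, hμ _ (hJW x hx)]
  -- `Λ ∘ h` satisfies the Cauchy–Riemann equations because `Λ ∘ J = i • Λ`.
  have hdiff : DifferentiableOn ℂ (Λ ∘ h) U := fun w hw =>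
    (Λ.hasFDerivAt.comp w (hh.differentiableAt (hU.mem_nhds hw)).hasFDerivAt
      |>.differentiableAt_complex fun v => by
        simpa [Λ, hCR w hw] using complexifyWith_apply_map (J := J) hJ μ _).differentiableWithinAt
  have hnear : Λ ∘ h =ᶠ[𝓝 c] 0 := by
    obtain ⟨ε, hε, hball⟩ := Metric.isOpen_iff.mp hU c (hSU hcS)
    exact eventuallyEq_of_mem (ball_mem_nhds c hε) <|
      eqOn_zero_of_eq_zero_on_real_ball hc (hdiff.mono hball)
        fun w hw hwre => hΛW _ (hreal w (hball hw) hwre)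
  simpa [Λ, re_complexifyWith] using
    congrArg Complex.re (hS.eqOn_zero_of_eventuallyEq_zero hU hdiff hSU hcS hnear hz)

section SliceRegular

variable {n d : ℕ}

lemma CS.apply_apply {I : EndE n} (hI : I ∈ CS n) (v : V n) : I (I v) = -v := by
  simpa using congrArg (· v) (show I * I = -1 from hI)

/-- `Ψ_I = Φ_I ∘ reIm d` holds definitionally. -/
def reIm (d : ℕ) : (Fin d → ℂ) →L[ℝ] (Fin d → ℝ) × (Fin d → ℝ) :=
  (ContinuousLinearMap.pi fun ℓ => Complex.reCLM.comp (ContinuousLinearMap.proj ℓ)).prod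
    (ContinuousLinearMap.pi fun ℓ => Complex.imCLM.comp (ContinuousLinearMap.proj ℓ))

lemma reIm_I_smul (v : Fin d → ℂ) :
    reIm d (Complex.I • v) = (-(reIm d v).2, (reIm d v).1) := by
  ext ℓ <;> simp [reIm]

lemma Psi_eq_of_im_eq_zero {z : Fin d → ℂ} (hz : ∀ ℓ, (z ℓ).im = 0) (I J : EndE n) :
    Psi n d I z = Psi n d J z := by
  funext ℓ
  simp only [Psi, hz ℓ, zero_smul ℝ I, zero_smul ℝ J]

lemma continuous_Phi (I : EndE n) : Continuous (Phi n d I) := by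
  unfold Phi
  fun_prop

lemma isOpen_preimage_Phi {𝒞 : Set (EndE n)} {Ω : Set (Fin d → EndE n)}
    (hΩ : SliceOpen n d 𝒞 Ω) {I : EndE n} (hI : I ∈ 𝒞) : IsOpen (Phi n d I ⁻¹' Ω) := by
  obtain ⟨U, hU, hΩU⟩ := hΩ.2 I hI
  have hslice : ∀ p, Phi n d I p ∈ CId n d I := fun p ℓ => ⟨p.1 ℓ, p.2 ℓ, rfl⟩
  convert hU.preimage (continuous_Phi I) using 1
  ext p
  simpa [hslice p] using Set.ext_iff.mp hΩU (Phi n d I p)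

lemma isOpen_preimage_Psi {𝒞 : Set (EndE n)} {Ω : Set (Fin d → EndE n)}
    (hΩ : SliceOpen n d 𝒞 Ω) {I : EndE n} (hI : I ∈ 𝒞) : IsOpen (Psi n d I ⁻¹' Ω) :=
  (isOpen_preimage_Phi hΩ hI).preimage (reIm d).continuous

lemma map_rotate_of_cauchyRiemann {Y : Type*} [AddCommGroup Y] [Module ℝ Y]
    (L : (Fin d → ℝ) × (Fin d → ℝ) →ₗ[ℝ] Y) {J : Y →ₗ[ℝ] Y} (hJ : ∀ y, J (J y) = -y)
    (hCR : ∀ ℓ, L (ex d ℓ) + J (L (ey d ℓ)) = 0) (x y : Fin d → ℝ) :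
    L (-y, x) = J (L (x, y)) := by
  have hCR' : ∀ ℓ, L (ey d ℓ) = J (L (ex d ℓ)) := fun ℓ => by
    rw [eq_neg_of_add_eq_zero_left (hCR ℓ), map_neg, hJ, neg_neg]
  let rotate : (Fin d → ℝ) × (Fin d → ℝ) →ₗ[ℝ] (Fin d → ℝ) × (Fin d → ℝ) :=
    (-LinearMap.snd ℝ _ _).prod (LinearMap.fst ℝ _ _)
  suffices h : L ∘ₗ rotate = J ∘ₗ L from LinearMap.congr_fun h (x, y)
  ext ℓ
  · simpa [rotate, ex, ey] using hCR' ℓ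
  · have h := congrArg J (hCR' ℓ)
    rw [hJ] at h
    have hneg : ((-Pi.single ℓ 1, 0) : (Fin d → ℝ) × (Fin d → ℝ)) = -ex d ℓ := by simp [ex]
    simpa [rotate, hneg, ey] using h.symm

variable {𝒞 : Set (EndE n)} {Ω : Set (Fin d → EndE n)} {f : (Fin d → EndE n) → V n}

lemma WSRegular.hasFDerivAt_comp_Psi (hf : WSRegular n d 𝒞 Ω f) (hΩ : SliceOpen n d 𝒞 Ω)
    {I : EndE n} (hI : I ∈ 𝒞) {z : Fin d → ℂ} (hz : Psi n d I z ∈ Ω) :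
    HasFDerivAt (f ∘ Psi n d I) ((fderiv ℝ (f ∘ Phi n d I) (reIm d z)).comp (reIm d)) z :=
  ((hf I hI).1.differentiableAt ((isOpen_preimage_Phi hΩ hI).mem_nhds hz)).hasFDerivAt.comp z
    (reIm d).hasFDerivAt

lemma WSRegular.fderiv_comp_Psi_I_smul (hf : WSRegular n d 𝒞 Ω f) (hΩ : SliceOpen n d 𝒞 Ω)
    {I : EndE n} (hI : I ∈ 𝒞) (hIc : I ∈ CS n) {z : Fin d → ℂ} (hz : Psi n d I z ∈ Ω)
    (v : Fin d → ℂ) :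
    fderiv ℝ (f ∘ Psi n d I) z (Complex.I • v) = I (fderiv ℝ (f ∘ Psi n d I) z v) := by
  rw [(hf.hasFDerivAt_comp_Psi hΩ hI hz).fderiv]
  simp only [ContinuousLinearMap.comp_apply, reIm_I_smul]
  exact map_rotate_of_cauchyRiemann _ (J := (I : V n →ₗ[ℝ] V n)) (CS.apply_apply hIc)
    ((hf I hI).2 _ hz) _ _

end SliceRegular

section PathSlice

variable {n d : ℕ} {𝒞 : Set (EndE n)} {Ω : Set (Fin d → EndE n)} {f : (Fin d → EndE n) → V n}

def stemEval (I : EndE n) : V n × V n →ₗ[ℝ] V n :=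
  LinearMap.fst ℝ _ _ + (I : V n →ₗ[ℝ] V n) ∘ₗ LinearMap.snd ℝ _ _

lemma stemEval_apply (I : EndE n) (p : V n × V n) : stemEval I p = p.1 + I p.2 := rfl

/-- The map `z ↦ (f (Ψ_I z))_{I ∈ s}` is holomorphic for the complex structure
`J = (I)_{I ∈ s}` on `(ℝ^{2n})^s`, and `J` preserves the subspace of stem values. -/
lemma WSRegular.exists_stemEval_of_finset (hf : WSRegular n d 𝒞 Ω f) (hcs : 𝒞 ⊆ CS n)
    (hΩ : SliceOpen n d 𝒞 Ω) {γ : ℝ → Fin d → ℂ} (hγ : IsPath0 d γ) (s : Finset (EndE n))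
    (hs : ↑s ⊆ CPath n d 𝒞 Ω γ) : ∃ p, ∀ I ∈ s, stemEval I p = f (Psi n d I (γ 1)) := by
  have hs𝒞 : ∀ I : s, I.1 ∈ 𝒞 := fun I => (hs I.2).1
  let J : (s → V n) →L[ℝ] (s → V n) :=
    ContinuousLinearMap.pi fun I => I.1.comp (ContinuousLinearMap.proj I)
  let M : V n × V n →ₗ[ℝ] (s → V n) := LinearMap.pi fun I => stemEval I.1
  let h : (Fin d → ℂ) → s → V n := fun z I => f (Psi n d I z)
  let U := ⋂ I : s, Psi n d I ⁻¹' Ω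
  have hU : IsOpen U := isOpen_iInter_of_finite fun I => isOpen_preimage_Psi hΩ (hs𝒞 I)
  have hUΩ : ∀ z ∈ U, ∀ I : s, Psi n d I z ∈ Ω := fun z hz => mem_iInter.mp hz
  have hfderiv : ∀ z ∈ U, ∀ I : s, DifferentiableAt ℝ (f ∘ Psi n d I) z := fun z hz I =>
    (hf.hasFDerivAt_comp_Psi hΩ (hs𝒞 I) (hUΩ z hz I)).differentiableAt
  have hJ : ∀ x, J (J x) = -x := fun x => funext fun I => CS.apply_apply (hcs (hs𝒞 I)) (x I)
  have hJM : ∀ x ∈ LinearMap.range M, J x ∈ LinearMap.range M := by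
    rintro _ ⟨p, rfl⟩
    refine ⟨(-p.2, p.1), funext fun I => ?_⟩
    simp [M, J, stemEval_apply, CS.apply_apply (hcs (hs𝒞 I))]
    abel
  have hreal : ∀ z ∈ U, (∀ ℓ, (z ℓ).im = 0) → h z ∈ LinearMap.range M := fun z _ hz =>
    ⟨(f (Psi n d 0 z), 0), funext fun I => by
      simp [M, h, stemEval_apply, Psi_eq_of_im_eq_zero hz I.1 0]⟩
  have hmaps := (isPreconnected_Icc.image γ hγ.1).mapsTo_of_complexStructure (h := h) J hJ _
    hJM hU
    (fun z hz => (differentiableAt_pi.mpr (hfderiv z hz)).differentiableWithinAt)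
    (fun z hz v => by
      have hD : fderiv ℝ h z = ContinuousLinearMap.pi fun I : s => fderiv ℝ (f ∘ Psi n d I) z :=
        fderiv_pi (hfderiv z hz)
      rw [hD]
      funext I
      exact hf.fderiv_comp_Psi_I_smul hΩ (hs𝒞 I) (hcs (hs𝒞 I)) (hUΩ z hz I) v)
    hreal (image_subset_iff.mpr fun t ht => mem_iInter.mpr fun I => (hs I.2).2 t ht)
    (mem_image_of_mem γ (left_mem_Icc.mpr zero_le_one)) hγ.2
  obtain ⟨p, hp⟩ := hmaps (mem_image_of_mem γ (right_mem_Icc.mpr zero_le_one))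
  exact ⟨p, fun I hI => congrFun hp ⟨I, hI⟩⟩

end PathSlice

theorem weak_slice_regular_is_path_slice_general (n d : ℕ)
    (𝒞 : Set (EndE n)) (hcs : 𝒞 ⊆ CS n)
    (Ω : Set (Fin d → EndE n)) (hΩ : SliceOpen n d 𝒞 Ω)
    (f : (Fin d → EndE n) → V n) (hf : WSRegular n d 𝒞 Ω f) :
    ∃ F₁ F₂ : (ℝ → Fin d → ℂ) → V n,
      ∀ γ : ℝ → Fin d → ℂ, PathIn n d 𝒞 Ω γ →
        ∀ I ∈ CPath n d 𝒞 Ω γ,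
          f (Psi n d I (γ 1)) = F₁ γ + I (F₂ γ) := by
  have hstem : ∀ γ, ∃ p : V n × V n, PathIn n d 𝒞 Ω γ →
      ∀ I ∈ CPath n d 𝒞 Ω γ, f (Psi n d I (γ 1)) = p.1 + I p.2 := by
    intro γ
    by_cases hγ : PathIn n d 𝒞 Ω γ
    · obtain ⟨p, hp⟩ := exists_forall_eq_of_forall_finset _ stemEval _
        (hf.exists_stemEval_of_finset hcs hΩ hγ.1)
      exact ⟨p, fun _ I hI => (hp I hI).symm⟩
    · exact ⟨0, fun h => absurd h hγ⟩
  choose p hp using hstem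
  exact ⟨fun γ => (p γ).1, fun γ => (p γ).2, hp⟩

/-- Every weak slice regular function on a slice-open set is path-slice: there is a
stem function F = (F₁, F₂) on 𝒫(ℂ^d, Ω) with f(γ^I(1)) = F₁(γ) + I(F₂(γ)) for every
γ ∈ 𝒫(ℂ^d, Ω) and every I ∈ 𝒞(γ, Ω). -/
theorem weak_slice_regular_is_path_slice (n d : ℕ) (hn : 1 ≤ n) (hd : 1 ≤ d)
    (𝒞 : Set (EndE n)) (h𝒞 : 𝒞.Nonempty) (hsym : ∀ I ∈ 𝒞, -I ∈ 𝒞) (hcs : 𝒞 ⊆ CS n)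
    (Ω : Set (Fin d → EndE n)) (hΩ : SliceOpen n d 𝒞 Ω)
    (f : (Fin d → EndE n) → V n) (hf : WSRegular n d 𝒞 Ω f) :
    ∃ F₁ F₂ : (ℝ → Fin d → ℂ) → V n,
      ∀ γ : ℝ → Fin d → ℂ, PathIn n d 𝒞 Ω γ →
        ∀ I ∈ CPath n d 𝒞 Ω γ,
          f (Psi n d I (γ 1)) = F₁ γ + I (F₂ γ) :=
  weak_slice_regular_is_path_slice_general n d 𝒞 hcs Ω hΩ f hf
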